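/- Let A be a synaptic algebra with projection lattice P, and let e,e₁,e₂,f,f₁,f₂ ∈ P with e₁ ⊥ f₂, e₂ ⊥ f₁, e₁ ⊥ e₂, f₁ ⊥ f₂, e = e₁ + e₂ and f = f₁ + f₂. If e₁ and f₁ are exchanged by a symmetry s₁ ∈ A and e₂ and f₂ are exchanged by a symmetry s₂ ∈ A, then there is a symmetry s ∈ A exchanging e and f. -/
import Mathlib


/-- For subsets `A, B` of a ring `R`, the commutant of `B` within `A`:
`C(B) = {x ∈ A : x b = b x for all b ∈ B}`. -/
def SynComm {R : Type*} [Ring R] (A : Set R) (B : Set R) : Set R :=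
  {x | x ∈ A ∧ ∀ b ∈ B, x * b = b * x}

/-- A synaptic algebra: a real vector subspace `A` of a real linear associative
algebra `R` with unity, satisfying axioms SA1–SA8 of Foulis.  The partial order
is recorded as a relation `le` on `R`, whose axioms are imposed on elements of
`A`; `1` is an order unit, the order is archimedean, and the norm convergence
occurring in SA8 is expressed via the order-unit characterization
`‖a‖ ≤ ε ↔ -ε•1 ≤ a ≤ ε•1`. -/
structure SynapticAlgebra (R : Type*) [Ring R] [Algebra ℝ R] where
  A : Set R
  zero_mem : (0 : R) ∈ A
  one_mem : (1 : R) ∈ A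
  add_mem : ∀ {a b : R}, a ∈ A → b ∈ A → a + b ∈ A
  smul_mem : ∀ (r : ℝ) {a : R}, a ∈ A → r • a ∈ A
  /-- the partial order on `A` (SA1) -/
  le : R → R → Prop
  le_refl : ∀ a ∈ A, le a a
  le_trans : ∀ a ∈ A, ∀ b ∈ A, ∀ c ∈ A, le a b → le b c → le a c
  le_antisymm : ∀ a ∈ A, ∀ b ∈ A, le a b → le b a → a = b
  add_le_add : ∀ a ∈ A, ∀ b ∈ A, ∀ c ∈ A, le a b → le (a + c) (b + c)
  smul_nonneg : ∀ (r : ℝ), 0 ≤ r → ∀ a ∈ A, le 0 a → le 0 (r • a)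
  /-- SA1: the ordered vector space `A` is archimedean -/
  archimedean : ∀ a ∈ A, ∀ b ∈ A, (∀ n : ℕ, le (n • a) b) → le a 0
  /-- SA1: `1` is an order unit for `A` -/
  orderUnit : ∀ a ∈ A, ∃ r : ℝ, le a (r • (1 : R))
  /-- SA2 (together with closure of `A` under squaring) -/
  sq_mem : ∀ a ∈ A, a * a ∈ A
  sq_nonneg : ∀ a ∈ A, le 0 (a * a)
  /-- SA3 -/
  SA3 : ∀ a ∈ A, ∀ b ∈ A, le 0 a → le 0 b → le 0 (a * b * a)
  /-- SA4 -/
  SA4 : ∀ a ∈ A, ∀ b ∈ A, le 0 b → a * b * a = 0 → a * b = 0 ∧ b * a = 0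
  /-- SA5: positive elements have square roots in `CC(a)` -/
  SA5 : ∀ a ∈ A, le 0 a →
    ∃ b ∈ SynComm A (SynComm A {a}), le 0 b ∧ b * b = a
  /-- SA6: existence of carrier projections -/
  SA6 : ∀ a ∈ A, ∃ p ∈ A, p * p = p ∧ ∀ b ∈ A, (a * b = 0 ↔ p * b = 0)
  /-- SA7: elements above `1` are invertible -/
  SA7 : ∀ a ∈ A, le 1 a → ∃ b ∈ A, a * b = 1 ∧ b * a = 1
  /-- SA8: commutants are closed under norm limits of ascending commuting sequences -/
  SA8 : ∀ a ∈ A, ∀ b ∈ A, ∀ f : ℕ → R, (∀ n, f n ∈ A) →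
    (∀ n, f n * b = b * f n) → (∀ n m, f n * f m = f m * f n) →
    (∀ n, le (f n) (f (n + 1))) →
    (∀ ε : ℝ, 0 < ε → ∃ N : ℕ, ∀ n ≥ N,
        le (a - f n) (ε • (1 : R)) ∧ le ((-ε) • (1 : R)) (a - f n)) →
    a * b = b * a
  /-- non-degeneracy: `0 ≠ 1` -/
  nondegenerate : (0 : R) ≠ 1

namespace SynapticAlgebra

variable {R : Type*} [Ring R] [Algebra ℝ R] (S : SynapticAlgebra R)

/-- The set `P` of projections of the synaptic algebra. -/
def Proj : Set R := {p | p ∈ S.A ∧ p * p = p}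

/-- A symmetry: an element `s ∈ A` with `s² = 1`. -/
def IsSymmetry (s : R) : Prop := s ∈ S.A ∧ s * s = 1

/-- Projections `e` and `f` are exchanged by a symmetry. -/
def ExchBySym (e f : R) : Prop := ∃ s, S.IsSymmetry s ∧ s * e * s = f

/-- `p ∼ q`: equivalence of projections induced by finite sequences of
symmetries, i.e. `q = sₙ ⋯ s₁ p s₁ ⋯ sₙ`. -/
def Equiv (p q : R) : Prop := Relation.ReflTransGen S.ExchBySym p q

/-- `p` and `q` are related: they have nonzero equivalent subprojections. -/
def Related (p q : R) : Prop :=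
  ∃ p₁ ∈ S.Proj, ∃ q₁ ∈ S.Proj, p₁ ≠ 0 ∧ q₁ ≠ 0 ∧
    S.le p₁ p ∧ S.le q₁ q ∧ S.Equiv p₁ q₁

/-- `p ≼ q`: `p` is equivalent to a subprojection of `q`. -/
def SubEquiv (p q : R) : Prop := ∃ q₁ ∈ S.Proj, S.le q₁ q ∧ S.Equiv p q₁

/-- `c` commutes with every element of `A` (so a projection `c` with this
property is a central projection, `c ∈ P ∩ C(A)`). -/
def IsCentral (c : R) : Prop := ∀ a ∈ S.A, c * a = a * c

/-- `m = e ∧ f`, the infimum of `e` and `f` in the projection lattice `P`. -/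
def IsMeet (e f m : R) : Prop :=
  m ∈ S.Proj ∧ S.le m e ∧ S.le m f ∧
    ∀ r ∈ S.Proj, S.le r e → S.le r f → S.le r m

/-- `j = e ∨ f`, the supremum of `e` and `f` in the projection lattice `P`. -/
def IsJoin (e f j : R) : Prop :=
  j ∈ S.Proj ∧ S.le e j ∧ S.le f j ∧
    ∀ r ∈ S.Proj, S.le e r → S.le f r → S.le j r

/-- `m = ⋁ Q`, the supremum of the set `Q` in the projection lattice `P`. -/
def IsSupOf (Q : Set R) (m : R) : Prop :=
  m ∈ S.Proj ∧ (∀ q ∈ Q, S.le q m) ∧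
    ∀ b ∈ S.Proj, (∀ q ∈ Q, S.le q b) → S.le m b

/-- `m = ⋀ Q`, the infimum of the set `Q` in the projection lattice `P`. -/
def IsInfOf (Q : Set R) (m : R) : Prop :=
  m ∈ S.Proj ∧ (∀ q ∈ Q, S.le m q) ∧
    ∀ b ∈ S.Proj, (∀ q ∈ Q, S.le b q) → S.le b m

/-- The projection lattice `P` is a complete lattice: every subset of `P`
has a supremum and an infimum in `P`. -/
def ProjComplete : Prop :=
  ∀ Q ⊆ S.Proj, (∃ m, S.IsSupOf Q m) ∧ (∃ m, S.IsInfOf Q m)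

/-- The projection lattice `P` is centrally orthocomplete: every family of
projections dominated by a pairwise orthogonal family of central projections
has a supremum in `P`. -/
def CentrallyOrthocomplete : Prop :=
  ∀ Q ⊆ S.Proj, ∀ c : R → R,
    (∀ q ∈ Q, c q ∈ S.Proj ∧ S.IsCentral (c q) ∧ S.le q (c q)) →
    (∀ q ∈ Q, ∀ q' ∈ Q, q ≠ q' → c q * c q' = 0) →
    ∃ m, S.IsSupOf Q m

/-- `c = γ p`: `c` is the central cover of `p`, the smallest central
projection dominating `p`. -/
def IsCentralCover (p c : R) : Prop :=
  c ∈ S.Proj ∧ S.IsCentral c ∧ S.le p c ∧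
    ∀ d ∈ S.Proj, S.IsCentral d → S.le p d → S.le c d

/-- `x = φ_e(f) = e ∧ (e^⊥ ∨ f)`, the Sasaki projection of `f` determined
by `e`, in the projection lattice `P` (where `e^⊥ = 1 - e`). -/
def IsSasaki (e f x : R) : Prop :=
  ∃ j, S.IsJoin (1 - e) f j ∧ S.IsMeet e j x

/-- Mackey compatibility of projections `p` and `q` in the OML `P`:
there are pairwise orthogonal projections `p₁, q₁, d` with `p = p₁ ∨ d = p₁ + d`
and `q = q₁ ∨ d = q₁ + d` (orthogonal projections satisfy `pq = qp = 0` and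
their join is their sum). -/
def Compatible (p q : R) : Prop :=
  ∃ p₁ ∈ S.Proj, ∃ q₁ ∈ S.Proj, ∃ d ∈ S.Proj,
    p₁ * q₁ = 0 ∧ q₁ * p₁ = 0 ∧ p₁ * d = 0 ∧ d * p₁ = 0 ∧
    q₁ * d = 0 ∧ d * q₁ = 0 ∧ p = p₁ + d ∧ q = q₁ + d

end SynapticAlgebra

namespace SynapticAlgebra

variable {R : Type*} [Ring R] [Algebra ℝ R] (S : SynapticAlgebra R)

lemma neg_mem' {a : R} (ha : a ∈ S.A) : -a ∈ S.A := by
  have h := S.smul_mem (-1) ha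
  rwa [neg_one_smul] at h

lemma sub_mem' {a b : R} (ha : a ∈ S.A) (hb : b ∈ S.A) : a - b ∈ S.A := by
  rw [sub_eq_add_neg]; exact S.add_mem ha (S.neg_mem' hb)

lemma jordan_mem {a b : R} (ha : a ∈ S.A) (hb : b ∈ S.A) : a * b + b * a ∈ S.A := by
  have h : a * b + b * a = (a + b) * (a + b) - a * a - b * b := by noncomm_ring
  rw [h]
  exact S.sub_mem' (S.sub_mem' (S.sq_mem _ (S.add_mem ha hb)) (S.sq_mem _ ha)) (S.sq_mem _ hb)

lemma conj_mem {a b : R} (ha : a ∈ S.A) (hb : b ∈ S.A) : a * b * a ∈ S.A := by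
  have hj : a * b + b * a ∈ S.A := S.jordan_mem ha hb
  have hj2 : a * (a * b + b * a) + (a * b + b * a) * a ∈ S.A := S.jordan_mem ha hj
  have hj3 : (a * a) * b + b * (a * a) ∈ S.A := S.jordan_mem (S.sq_mem _ ha) hb
  have key : a * b * a =
      (2⁻¹ : ℝ) • ((a * (a * b + b * a) + (a * b + b * a) * a) - ((a * a) * b + b * (a * a))) := by
    have h2 : (a * (a * b + b * a) + (a * b + b * a) * a) - ((a * a) * b + b * (a * a))
        = a * b * a + a * b * a := by noncomm_ring
    rw [h2, ← two_smul ℝ (a * b * a), smul_smul]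
    norm_num
  rw [key]
  exact S.smul_mem _ (S.sub_mem' hj2 hj3)

lemma proj_nonneg {p : R} (hpA : p ∈ S.A) (hpp : p * p = p) : S.le 0 p := by
  have h := S.sq_nonneg p hpA
  rwa [hpp] at h

lemma add_nonneg' {a b : R} (ha : a ∈ S.A) (hb : b ∈ S.A)
    (h0a : S.le 0 a) (h0b : S.le 0 b) : S.le 0 (a + b) := by
  have h1 : S.le (0 + b) (a + b) := S.add_le_add 0 S.zero_mem a ha b hb h0a
  rw [zero_add] at h1
  exact S.le_trans 0 S.zero_mem b hb (a + b) (S.add_mem ha hb) h0b h1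

lemma eq_zero_of_add {x y : R} (hx : x ∈ S.A) (hy : y ∈ S.A)
    (h0x : S.le 0 x) (h0y : S.le 0 y) (hxy : x + y = 0) : x = 0 := by
  have h1 : S.le (0 + x) (y + x) := S.add_le_add 0 S.zero_mem y hy x hx h0y
  rw [zero_add] at h1
  have h2 : y + x = 0 := by rw [add_comm]; exact hxy
  rw [h2] at h1
  exact S.le_antisymm x hx 0 S.zero_mem h1 h0x

/-- Carrier of the sum of two projections dominates both. -/
lemma carrier_strong {x y : R} (hxA : x ∈ S.A) (hxx : x * x = x)
    (hyA : y ∈ S.A) (hyy : y * y = y) :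
    ∃ g, g ∈ S.A ∧ g * g = g ∧ S.le 0 g ∧
      (∀ b ∈ S.A, ((x + y) * b = 0 ↔ g * b = 0)) ∧
      g * x = x ∧ x * g = x ∧ g * y = y ∧ y * g = y ∧ (x + y) * g = x + y := by
  obtain ⟨p, hpA, hpp, hiff⟩ := S.SA6 (x + y) (S.add_mem hxA hyA)
  have haA : x + y ∈ S.A := S.add_mem hxA hyA
  have h1p : (1 : R) - p ∈ S.A := S.sub_mem' S.one_mem hpA
  have h1pp : (1 - p) * (1 - p) = 1 - p := by
    rw [mul_sub, mul_one, sub_mul, one_mul, hpp]; abel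
  have h1p0 : S.le 0 (1 - p) := S.proj_nonneg h1p h1pp
  have hx0 : S.le 0 x := S.proj_nonneg hxA hxx
  have hy0 : S.le 0 y := S.proj_nonneg hyA hyy
  have ha0 : S.le 0 (x + y) := S.add_nonneg' hxA hyA hx0 hy0
  have hp1 : p * (1 - p) = 0 := by rw [mul_sub, mul_one, hpp, sub_self]
  have ha1 : (x + y) * (1 - p) = 0 := (hiff (1 - p) h1p).mpr hp1
  have hap : (x + y) * p = x + y := by
    rw [mul_sub, mul_one, sub_eq_zero] at ha1; exact ha1.symm
  -- each component is killed by 1 - p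
  have hsum0 : (1 - p) * x * (1 - p) + (1 - p) * y * (1 - p) = 0 := by
    have h : (1 - p) * x * (1 - p) + (1 - p) * y * (1 - p)
        = (1 - p) * ((x + y) * (1 - p)) := by noncomm_ring
    rw [h, ha1, mul_zero]
  have hxm : (1 - p) * x * (1 - p) ∈ S.A := S.conj_mem h1p hxA
  have hym : (1 - p) * y * (1 - p) ∈ S.A := S.conj_mem h1p hyA
  have hx0' : S.le 0 ((1 - p) * x * (1 - p)) := S.SA3 (1 - p) h1p x hxA h1p0 hx0
  have hy0' : S.le 0 ((1 - p) * y * (1 - p)) := S.SA3 (1 - p) h1p y hyA h1p0 hy0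
  have hxz : (1 - p) * x * (1 - p) = 0 := S.eq_zero_of_add hxm hym hx0' hy0' hsum0
  have hyz : (1 - p) * y * (1 - p) = 0 := by
    have h' : (1 - p) * y * (1 - p) + (1 - p) * x * (1 - p) = 0 := by
      rw [add_comm]; exact hsum0
    exact S.eq_zero_of_add hym hxm hy0' hx0' h'
  have h4x := S.SA4 (1 - p) h1p x hxA hx0 hxz
  have h4y := S.SA4 (1 - p) h1p y hyA hy0 hyz
  have hpx : p * x = x := by
    have := h4x.1; rw [sub_mul, one_mul, sub_eq_zero] at this; exact this.symm
  have hxp : x * p = x := by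
    have := h4x.2; rw [mul_sub, mul_one, sub_eq_zero] at this; exact this.symm
  have hpy : p * y = y := by
    have := h4y.1; rw [sub_mul, one_mul, sub_eq_zero] at this; exact this.symm
  have hyp : y * p = y := by
    have := h4y.2; rw [mul_sub, mul_one, sub_eq_zero] at this; exact this.symm
  exact ⟨p, hpA, hpp, S.proj_nonneg hpA hpp, hiff, hpx, hxp, hpy, hyp, hap⟩

/-- A symmetry exchanging `x` and `y` commutes with the carrier of `x + y`. -/
lemma sym_comm {x y s g : R} (hxA : x ∈ S.A) (hyA : y ∈ S.A)
    (hsA : s ∈ S.A) (hss : s * s = 1) (hxy : s * x * s = y) (hyx : s * y * s = x)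
    (hgA : g ∈ S.A) (hg0 : S.le 0 g)
    (hiff : ∀ b ∈ S.A, ((x + y) * b = 0 ↔ g * b = 0))
    (hag : (x + y) * g = x + y) : s * g * s = g := by
  have hasa : s * (x + y) * s = x + y := by
    have h : s * (x + y) * s = s * x * s + s * y * s := by noncomm_ring
    rw [h, hxy, hyx, add_comm]
  have hsa : (x + y) * s = s * (x + y) := by
    have h := congrArg (· * s) hasa
    simp only [mul_assoc, hss, mul_one] at h
    exact h.symm
  have hcA : s * g * s ∈ S.A := S.conj_mem hsA hgA
  have hac : (x + y) * (s * g * s) = x + y := by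
    calc (x + y) * (s * g * s) = ((x + y) * s) * g * s := by noncomm_ring
    _ = (s * (x + y)) * g * s := by rw [hsa]
    _ = s * ((x + y) * g) * s := by noncomm_ring
    _ = s * (x + y) * s := by rw [hag]
    _ = x + y := hasa
  have h1c : (1 : R) - s * g * s ∈ S.A := S.sub_mem' S.one_mem hcA
  have ha1c : (x + y) * (1 - s * g * s) = 0 := by
    rw [mul_sub, mul_one, hac, sub_self]
  have hg1c : g * (1 - s * g * s) = 0 := (hiff _ h1c).mp ha1c
  have hgc : g * (s * g * s) = g := by
    have h := hg1c; rw [mul_sub, mul_one, sub_eq_zero] at h; exact h.symm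
  have hgsg : g * s * g = g * s := by
    have h := congrArg (· * s) hgc
    simp only [mul_assoc, hss, mul_one] at h
    rw [mul_assoc]; exact h
  have hcg : (s * g * s) * g = s * g * s := by
    calc (s * g * s) * g = s * (g * s * g) := by noncomm_ring
    _ = s * (g * s) := by rw [hgsg]
    _ = s * g * s := by noncomm_ring
  have h1c0 : (1 - s * g * s) * g * (1 - s * g * s) = 0 := by
    rw [mul_assoc, hg1c, mul_zero]
  have h4 := S.SA4 _ h1c _ hgA hg0 h1c0
  have h5 : (1 - s * g * s) * g = 0 := h4.1
  rw [sub_mul, one_mul, sub_eq_zero] at h5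
  rw [hcg] at h5
  exact h5.symm

end SynapticAlgebra

/-- Lemma 5.6 (weak finite additivity of exchangeability): if
`e = e₁ + e₂`, `f = f₁ + f₂` with `e₁ ⊥ f₂`, `e₂ ⊥ f₁`, `e₁ ⊥ e₂`, `f₁ ⊥ f₂`,
and `eᵢ` and `fᵢ` are exchanged by a symmetry `sᵢ` for `i = 1,2`, then there
is a symmetry `s` exchanging `e` and `f`. -/
theorem stmt6 {R : Type*} [Ring R] [Algebra ℝ R] (S : SynapticAlgebra R)
    (e e₁ e₂ f f₁ f₂ s₁ s₂ : R)
    (he : e ∈ S.Proj) (he₁ : e₁ ∈ S.Proj) (he₂ : e₂ ∈ S.Proj)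
    (hf : f ∈ S.Proj) (hf₁ : f₁ ∈ S.Proj) (hf₂ : f₂ ∈ S.Proj)
    (h12 : e₁ * f₂ = 0) (h12' : f₂ * e₁ = 0)
    (h21 : e₂ * f₁ = 0) (h21' : f₁ * e₂ = 0)
    (hee : e₁ * e₂ = 0) (hee' : e₂ * e₁ = 0)
    (hff : f₁ * f₂ = 0) (hff' : f₂ * f₁ = 0)
    (hesum : e = e₁ + e₂) (hfsum : f = f₁ + f₂)
    (hs₁ : S.IsSymmetry s₁) (hex₁ : s₁ * e₁ * s₁ = f₁)
    (hs₂ : S.IsSymmetry s₂) (hex₂ : s₂ * e₂ * s₂ = f₂) :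
    ∃ s, S.IsSymmetry s ∧ s * e * s = f := by
  obtain ⟨g₁, hg₁A, hg₁g₁, hg₁0, hiff₁, hg₁e₁, he₁g₁, hg₁f₁, hf₁g₁, ha₁g₁⟩ :=
    S.carrier_strong he₁.1 he₁.2 hf₁.1 hf₁.2
  obtain ⟨g₂, hg₂A, hg₂g₂, hg₂0, hiff₂, hg₂e₂, he₂g₂, hg₂f₂, hf₂g₂, ha₂g₂⟩ :=
    S.carrier_strong he₂.1 he₂.2 hf₂.1 hf₂.2
  -- orthogonality relations
  have hg₂e₁ : g₂ * e₁ = 0 := (hiff₂ e₁ he₁.1).mp (by rw [add_mul, hee', h12', add_zero])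
  have hg₂f₁ : g₂ * f₁ = 0 := (hiff₂ f₁ hf₁.1).mp (by rw [add_mul, h21, hff', add_zero])
  have hg₁e₂ : g₁ * e₂ = 0 := (hiff₁ e₂ he₂.1).mp (by rw [add_mul, hee, h21', add_zero])
  have hg₁f₂ : g₁ * f₂ = 0 := (hiff₁ f₂ hf₂.1).mp (by rw [add_mul, h12, hff, add_zero])
  have he₁g₂ : e₁ * g₂ = 0 :=
    (S.SA4 e₁ he₁.1 g₂ hg₂A hg₂0 (by rw [mul_assoc, hg₂e₁, mul_zero])).1
  have hf₁g₂ : f₁ * g₂ = 0 :=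
    (S.SA4 f₁ hf₁.1 g₂ hg₂A hg₂0 (by rw [mul_assoc, hg₂f₁, mul_zero])).1
  have he₂g₁ : e₂ * g₁ = 0 :=
    (S.SA4 e₂ he₂.1 g₁ hg₁A hg₁0 (by rw [mul_assoc, hg₁e₂, mul_zero])).1
  have hf₂g₁ : f₂ * g₁ = 0 :=
    (S.SA4 f₂ hf₂.1 g₁ hg₁A hg₁0 (by rw [mul_assoc, hg₁f₂, mul_zero])).1
  have hg₂g₁ : g₂ * g₁ = 0 := (hiff₂ g₁ hg₁A).mp (by rw [add_mul, he₂g₁, hf₂g₁, add_zero])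
  have hg₁g₂ : g₁ * g₂ = 0 := (hiff₁ g₂ hg₂A).mp (by rw [add_mul, he₁g₂, hf₁g₂, add_zero])
  -- reversed exchanges
  have hex₁' : s₁ * f₁ * s₁ = e₁ := by
    calc s₁ * f₁ * s₁ = s₁ * (s₁ * e₁ * s₁) * s₁ := by rw [hex₁]
    _ = (s₁ * s₁) * e₁ * (s₁ * s₁) := by noncomm_ring
    _ = e₁ := by rw [hs₁.2, one_mul, mul_one]
  have hex₂' : s₂ * f₂ * s₂ = e₂ := by
    calc s₂ * f₂ * s₂ = s₂ * (s₂ * e₂ * s₂) * s₂ := by rw [hex₂]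
    _ = (s₂ * s₂) * e₂ * (s₂ * s₂) := by noncomm_ring
    _ = e₂ := by rw [hs₂.2, one_mul, mul_one]
  -- the symmetries commute with the carriers
  have hconj₁ : s₁ * g₁ * s₁ = g₁ :=
    S.sym_comm he₁.1 hf₁.1 hs₁.1 hs₁.2 hex₁ hex₁' hg₁A hg₁0 hiff₁ ha₁g₁
  have hconj₂ : s₂ * g₂ * s₂ = g₂ :=
    S.sym_comm he₂.1 hf₂.1 hs₂.1 hs₂.2 hex₂ hex₂' hg₂A hg₂0 hiff₂ ha₂g₂
  have hcomm₁ : s₁ * g₁ = g₁ * s₁ := by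
    have h := congrArg (· * s₁) hconj₁
    simp only [mul_assoc, hs₁.2, mul_one] at h
    exact h
  have hcomm₂ : s₂ * g₂ = g₂ * s₂ := by
    have h := congrArg (· * s₂) hconj₂
    simp only [mul_assoc, hs₂.2, mul_one] at h
    exact h
  -- membership of the candidate symmetry
  have hm₁ : s₁ * g₁ ∈ S.A := by
    have hj := S.jordan_mem hs₁.1 hg₁A
    have e2 : s₁ * g₁ = (2⁻¹ : ℝ) • (s₁ * g₁ + g₁ * s₁) := by
      rw [← hcomm₁, ← two_smul ℝ (s₁ * g₁), smul_smul]; norm_num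
    rw [e2]; exact S.smul_mem _ hj
  have hm₂ : s₂ * g₂ ∈ S.A := by
    have hj := S.jordan_mem hs₂.1 hg₂A
    have e2 : s₂ * g₂ = (2⁻¹ : ℝ) • (s₂ * g₂ + g₂ * s₂) := by
      rw [← hcomm₂, ← two_smul ℝ (s₂ * g₂), smul_smul]; norm_num
    rw [e2]; exact S.smul_mem _ hj
  have hm₃ : (1 : R) - g₁ - g₂ ∈ S.A := S.sub_mem' (S.sub_mem' S.one_mem hg₁A) hg₂A
  have hmem : s₁ * g₁ + s₂ * g₂ + (1 - g₁ - g₂) ∈ S.A := S.add_mem (S.add_mem hm₁ hm₂) hm₃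
  -- the nine product facts
  have p11 : (s₁ * g₁) * (s₁ * g₁) = g₁ := by rw [← mul_assoc, hconj₁, hg₁g₁]
  have p22 : (s₂ * g₂) * (s₂ * g₂) = g₂ := by rw [← mul_assoc, hconj₂, hg₂g₂]
  have p12 : (s₁ * g₁) * (s₂ * g₂) = 0 := by
    rw [mul_assoc s₁ g₁, hcomm₂, ← mul_assoc g₁ g₂ s₂, hg₁g₂, zero_mul, mul_zero]
  have p21 : (s₂ * g₂) * (s₁ * g₁) = 0 := by
    rw [mul_assoc s₂ g₂, hcomm₁, ← mul_assoc g₂ g₁ s₁, hg₂g₁, zero_mul, mul_zero]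
  have p13 : (s₁ * g₁) * (1 - g₁ - g₂) = 0 := by
    simp only [mul_sub, mul_one]
    rw [mul_assoc s₁ g₁ g₁, hg₁g₁, mul_assoc s₁ g₁ g₂, hg₁g₂, mul_zero, sub_zero, sub_self]
  have p23 : (s₂ * g₂) * (1 - g₁ - g₂) = 0 := by
    simp only [mul_sub, mul_one]
    rw [mul_assoc s₂ g₂ g₁, hg₂g₁, mul_zero, mul_assoc s₂ g₂ g₂, hg₂g₂, sub_zero, sub_self]
  have p31 : (1 - g₁ - g₂) * (s₁ * g₁) = 0 := by
    simp only [sub_mul, one_mul]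
    rw [hcomm₁, ← mul_assoc g₁ g₁ s₁, hg₁g₁, ← mul_assoc g₂ g₁ s₁, hg₂g₁, zero_mul,
      sub_zero, sub_self]
  have p32 : (1 - g₁ - g₂) * (s₂ * g₂) = 0 := by
    simp only [sub_mul, one_mul]
    rw [hcomm₂, ← mul_assoc g₁ g₂ s₂, hg₁g₂, zero_mul, ← mul_assoc g₂ g₂ s₂, hg₂g₂,
      sub_zero, sub_self]
  have p33 : (1 - g₁ - g₂) * (1 - g₁ - g₂) = 1 - g₁ - g₂ := by
    simp only [sub_mul, mul_sub, one_mul, mul_one, hg₁g₁, hg₂g₂, hg₁g₂, hg₂g₁, sub_zero]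
    abel
  refine ⟨s₁ * g₁ + s₂ * g₂ + (1 - g₁ - g₂), ⟨hmem, ?_⟩, ?_⟩
  · -- s * s = 1
    simp only [add_mul, mul_add, p11, p22, p12, p21, p13, p23, p31, p32, p33,
      add_zero, zero_add]
    abel
  · -- s * e * s = f
    rw [hesum, hfsum]
    have t1 : (s₁ * g₁) * e₁ = s₁ * e₁ := by rw [mul_assoc, hg₁e₁]
    have t2 : (s₂ * g₂) * e₁ = 0 := by rw [mul_assoc, hg₂e₁, mul_zero]
    have t3 : (1 - g₁ - g₂) * e₁ = 0 := by
      simp only [sub_mul, one_mul]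
      rw [hg₁e₁, hg₂e₁, sub_zero, sub_self]
    have q1 : (s₁ * g₁ + s₂ * g₂ + (1 - g₁ - g₂)) * e₁ = s₁ * e₁ := by
      rw [add_mul, add_mul, t1, t2, t3, add_zero, add_zero]
    have t1' : (s₁ * g₁) * e₂ = 0 := by rw [mul_assoc, hg₁e₂, mul_zero]
    have t2' : (s₂ * g₂) * e₂ = s₂ * e₂ := by rw [mul_assoc, hg₂e₂]
    have t3' : (1 - g₁ - g₂) * e₂ = 0 := by
      simp only [sub_mul, one_mul]
      rw [hg₁e₂, hg₂e₂, sub_zero, sub_self]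
    have q2 : (s₁ * g₁ + s₂ * g₂ + (1 - g₁ - g₂)) * e₂ = s₂ * e₂ := by
      rw [add_mul, add_mul, t1', t2', t3', zero_add, add_zero]
    have u1 : (s₁ * e₁) * (s₁ * g₁) = f₁ := by rw [← mul_assoc, hex₁, hf₁g₁]
    have u2 : (s₁ * e₁) * (s₂ * g₂) = 0 := by
      rw [mul_assoc s₁ e₁, hcomm₂, ← mul_assoc e₁ g₂ s₂, he₁g₂, zero_mul, mul_zero]
    have u3 : (s₁ * e₁) * (1 - g₁ - g₂) = 0 := by
      simp only [mul_sub, mul_one]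
      rw [mul_assoc s₁ e₁ g₁, he₁g₁, mul_assoc s₁ e₁ g₂, he₁g₂, mul_zero, sub_zero, sub_self]
    have r1 : (s₁ * e₁) * (s₁ * g₁ + s₂ * g₂ + (1 - g₁ - g₂)) = f₁ := by
      rw [mul_add, mul_add, u1, u2, u3, add_zero, add_zero]
    have u1' : (s₂ * e₂) * (s₂ * g₂) = f₂ := by rw [← mul_assoc, hex₂, hf₂g₂]
    have u2' : (s₂ * e₂) * (s₁ * g₁) = 0 := by
      rw [mul_assoc s₂ e₂, hcomm₁, ← mul_assoc e₂ g₁ s₁, he₂g₁, zero_mul, mul_zero]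
    have u3' : (s₂ * e₂) * (1 - g₁ - g₂) = 0 := by
      simp only [mul_sub, mul_one]
      rw [mul_assoc s₂ e₂ g₁, he₂g₁, mul_zero, mul_assoc s₂ e₂ g₂, he₂g₂, sub_zero, sub_self]
    have r2 : (s₂ * e₂) * (s₁ * g₁ + s₂ * g₂ + (1 - g₁ - g₂)) = f₂ := by
      rw [mul_add, mul_add, u1', u2', u3', zero_add, add_zero]
    rw [mul_add (s₁ * g₁ + s₂ * g₂ + (1 - g₁ - g₂)) e₁ e₂, q1, q2, add_mul, r1, r2]
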